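/- Theorem 3.2(2): Let p = 2, R = F_2 + vF_2 with v^2 = v, and let k₁, k₂, k₃, n be natural numbers with k = k₁ + k₂ + k₃ ≤ n. Let A (size k₁×k₂), B (k₁×k₃), D₁, D₂ (k₁×(n−k)), C₁ (k₂×(n−k)), E (k₃×(n−k)) be matrices over F_2, regarded as matrices over R via c ↦ (c,c). Let C be the R-submodule of R^n generated by the rows of the block matrix G with column blocks of sizes k₁, k₂, k₃, n−k and row blocks of sizes k₁, k₂, k₃: G = [ I_{k₁} | A | B | D₁+vD₂ ; 0 | vI_{k₂} | 0 | vC₁ ; 0 | 0 | (1+v)I_{k₃} | (1+v)E ]. Then the dual code C^⊥ equals the R-submodule of R^n generated by the rows of the block matrix H with column blocks of sizes k₁, k₂, k₃, n−k and row blocks of sizes n−k, k₃, k₂: H = [ EᵀBᵀ + C₁ᵀAᵀ + (D₁+vD₂)ᵀ | C₁ᵀ | Eᵀ | I_{n−k} ; vBᵀ | 0 | vI_{k₃} | 0 ; (1+v)Aᵀ | (1+v)I_{k₂} | 0 | 0 ]. -/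

import Mathlib

open Matrix

/-- The Euclidean dual of a linear code. -/
def dualCode {S : Type*} [CommRing S] {ι : Type*} [Fintype ι]
    (C : Submodule S (ι → S)) : Submodule S (ι → S) where
  carrier := {u | ∀ w ∈ C, ∑ i, u i * w i = 0}
  zero_mem' := by intro w hw; simp
  add_mem' := by
    intro a b ha hb w hw
    simp only [Set.mem_setOf_eq] at ha hb ⊢
    simp only [Pi.add_apply, add_mul, Finset.sum_add_distrib, ha w hw, hb w hw, add_zero]
  smul_mem' := by
    intro c a ha w hw
    simp only [Set.mem_setOf_eq] at ha ⊢
    simp only [Pi.smul_apply, smul_eq_mul, mul_assoc, ← Finset.mul_sum, ha w hw, mul_zero]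

/-- `F_2 → R = F_2 × F_2`, `c ↦ (c, c)`. -/
def eR : ZMod 2 → ZMod 2 × ZMod 2 := fun c => (c, c)

/-- `v = (0, 1)`. -/
def vR : ZMod 2 × ZMod 2 := (0, 1)

variable {k₁ k₂ k₃ r : ℕ}
  (A : Matrix (Fin k₁) (Fin k₂) (ZMod 2)) (B : Matrix (Fin k₁) (Fin k₃) (ZMod 2))
  (D₁ D₂ : Matrix (Fin k₁) (Fin r) (ZMod 2)) (C₁ : Matrix (Fin k₂) (Fin r) (ZMod 2))
  (E : Matrix (Fin k₃) (Fin r) (ZMod 2))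

/-- The generator matrix
`G = [ I | A | B | D₁+vD₂ ; 0 | vI | 0 | vC₁ ; 0 | 0 | (1+v)I | (1+v)E ]` over
`R = F_2 + vF_2`, with column blocks of sizes `k₁, k₂, k₃, n−k` (here `r = n − k`)
and row blocks of sizes `k₁, k₂, k₃`. -/
def Gmat : Matrix (Fin k₁ ⊕ Fin k₂ ⊕ Fin k₃)
    (Fin k₁ ⊕ Fin k₂ ⊕ Fin k₃ ⊕ Fin r) (ZMod 2 × ZMod 2) :=
  Matrix.of fun row c =>
    match row, c with
    | .inl i, .inl j => if i = j then 1 else 0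
    | .inl i, .inr (.inl j) => eR (A i j)
    | .inl i, .inr (.inr (.inl j)) => eR (B i j)
    | .inl i, .inr (.inr (.inr j)) => eR (D₁ i j) + vR * eR (D₂ i j)
    | .inr (.inl _), .inl _ => 0
    | .inr (.inl i), .inr (.inl j) => if i = j then vR else 0
    | .inr (.inl _), .inr (.inr (.inl _)) => 0
    | .inr (.inl i), .inr (.inr (.inr j)) => vR * eR (C₁ i j)
    | .inr (.inr _), .inl _ => 0
    | .inr (.inr _), .inr (.inl _) => 0
    | .inr (.inr i), .inr (.inr (.inl j)) => if i = j then 1 + vR else 0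
    | .inr (.inr i), .inr (.inr (.inr j)) => (1 + vR) * eR (E i j)

/-- The parity check matrix
`H = [ EᵀBᵀ + C₁ᵀAᵀ + (D₁+vD₂)ᵀ | C₁ᵀ | Eᵀ | I ; vBᵀ | 0 | vI | 0 ;
  (1+v)Aᵀ | (1+v)I | 0 | 0 ]`, with column blocks of sizes `k₁, k₂, k₃, n−k` and row
blocks of sizes `n−k, k₃, k₂`. -/
def Hmat : Matrix (Fin r ⊕ Fin k₃ ⊕ Fin k₂)
    (Fin k₁ ⊕ Fin k₂ ⊕ Fin k₃ ⊕ Fin r) (ZMod 2 × ZMod 2) :=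
  Matrix.of fun row c =>
    match row, c with
    | .inl s, .inl j => eR ((Eᵀ * Bᵀ + C₁ᵀ * Aᵀ + D₁ᵀ) s j) + vR * eR (D₂ᵀ s j)
    | .inl s, .inr (.inl j) => eR (C₁ᵀ s j)
    | .inl s, .inr (.inr (.inl j)) => eR (Eᵀ s j)
    | .inl s, .inr (.inr (.inr t)) => if s = t then 1 else 0
    | .inr (.inl i), .inl j => vR * eR (Bᵀ i j)
    | .inr (.inl _), .inr (.inl _) => 0
    | .inr (.inl i), .inr (.inr (.inl j)) => if i = j then vR else 0
    | .inr (.inl _), .inr (.inr (.inr _)) => 0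
    | .inr (.inr i), .inl j => (1 + vR) * eR (Aᵀ i j)
    | .inr (.inr i), .inr (.inl j) => if i = j then 1 + vR else 0
    | .inr (.inr _), .inr (.inr _) => 0

/-!
Split a word along the column blocks as `u = (u₁, u₂, u₃, u₄)` and put `D = D₁ + vD₂`,
`a = u₂ + C₁u₄`, `b = u₃ + Eu₄`. Orthogonality to the three row blocks of `G` reads
`u₁ + Au₂ + Bu₃ + Du₄ = 0`, `va = 0` and `(1 + v)b = 0`. Since `v` and `1 + v` are
complementary idempotents and `R` has characteristic `2`, the last two say `(1 + v)a = a` and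
`vb = b`, and then `u` is the combination of the rows of `H` with coefficients `(u₄, b, a)`.
Conversely, every combination `x ᵥ* H` satisfies the three equations.
-/

theorem mem_dualCode_span_range_iff {S ι κ : Type*} [CommRing S] [Fintype ι]
    (M : Matrix κ ι S) (u : ι → S) :
    u ∈ dualCode (Submodule.span S (Set.range M)) ↔ M *ᵥ u = 0 := by
  change Submodule.span S (Set.range M) ≤ LinearMap.ker (dotProductBilin S S u) ↔ _
  rw [Submodule.span_le, funext_iff]
  refine Set.range_subset_iff.trans (forall_congr' fun k => ?_)
  simp [dotProductBilin, mulVec, dotProduct_comm]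

theorem mem_span_range_iff_exists_vecMul {S ι κ : Type*} [CommRing S] [Fintype κ]
    (M : Matrix κ ι S) (u : ι → S) :
    u ∈ Submodule.span S (Set.range M) ↔ ∃ x, x ᵥ* M = u := by
  change u ∈ Submodule.span S (Set.range M.row) ↔ _
  rw [← range_vecMulLinear]
  rfl

theorem exists_sum_elim_eq {α β γ : Type*} (u : α ⊕ β → γ) : ∃ f g, Sum.elim f g = u :=
  ⟨_, _, Sum.elim_comp_inl_inr u⟩

theorem eR_eq_algebraMap : eR = algebraMap (ZMod 2) (ZMod 2 × ZMod 2) := rfl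

theorem Gmat_mulVec (u₁ : Fin k₁ → ZMod 2 × ZMod 2) (u₂ : Fin k₂ → ZMod 2 × ZMod 2)
    (u₃ : Fin k₃ → ZMod 2 × ZMod 2) (u₄ : Fin r → ZMod 2 × ZMod 2) :
    Gmat A B D₁ D₂ C₁ E *ᵥ Sum.elim u₁ (Sum.elim u₂ (Sum.elim u₃ u₄)) =
      Sum.elim (u₁ + A.map eR *ᵥ u₂ + B.map eR *ᵥ u₃ + (D₁.map eR + vR • D₂.map eR) *ᵥ u₄)
        (Sum.elim (vR • (u₂ + C₁.map eR *ᵥ u₄)) ((1 + vR) • (u₃ + E.map eR *ᵥ u₄))) := by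
  funext i
  rcases i with i | i | i <;>
    simp [Gmat, mulVec, dotProduct, Fintype.sum_sum_type, add_mul, Finset.mul_sum, mul_assoc,
      Finset.sum_add_distrib, add_assoc]

theorem Hmat_inl_inl (s : Fin r) (j : Fin k₁) :
    Hmat A B D₁ D₂ C₁ E (.inl s) (.inl j) =
      (B.map eR * E.map eR + A.map eR * C₁.map eR + (D₁.map eR + vR • D₂.map eR)) j s := by
  rw [eR_eq_algebraMap, ← Matrix.map_mul, ← Matrix.map_mul]
  simp only [Hmat, of_apply, ← transpose_mul, transpose_apply, Matrix.add_apply,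
    Matrix.smul_apply, map_apply, eR_eq_algebraMap, map_add, smul_eq_mul, add_assoc]

theorem vecMul_Hmat (x₁ : Fin r → ZMod 2 × ZMod 2) (x₂ : Fin k₃ → ZMod 2 × ZMod 2)
    (x₃ : Fin k₂ → ZMod 2 × ZMod 2) :
    Sum.elim x₁ (Sum.elim x₂ x₃) ᵥ* Hmat A B D₁ D₂ C₁ E =
      Sum.elim (B.map eR *ᵥ E.map eR *ᵥ x₁ + A.map eR *ᵥ C₁.map eR *ᵥ x₁ +
          (D₁.map eR + vR • D₂.map eR) *ᵥ x₁ + B.map eR *ᵥ (vR • x₂) +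
          A.map eR *ᵥ ((1 + vR) • x₃))
        (Sum.elim (C₁.map eR *ᵥ x₁ + (1 + vR) • x₃)
          (Sum.elim (E.map eR *ᵥ x₁ + vR • x₂) x₁)) := by
  funext j
  rcases j with j | j | j | j
  · simp only [vecMul, dotProduct, Fintype.sum_sum_type, Sum.elim_inl, Sum.elim_inr, Hmat_inl_inl]
    simp [mulVec_mulVec, ← add_mulVec, Hmat, mulVec, dotProduct, mul_comm, mul_left_comm,
      add_assoc]
  all_goals simp [Hmat, vecMul, mulVec, dotProduct, Fintype.sum_sum_type, mul_comm]

/-- Theorem 3.2(2): for `p = 2`, the dual of the code generated by the rows of `G` is the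
code generated by the rows of `H`; i.e. `H` is a generator matrix for `C^⊥` (and hence a
parity check matrix for `C`). -/
theorem dual_of_code_gen_by_G_char_two :
    dualCode (Submodule.span (ZMod 2 × ZMod 2)
        (Set.range fun row j => Gmat A B D₁ D₂ C₁ E row j)) =
      Submodule.span (ZMod 2 × ZMod 2)
        (Set.range fun row j => Hmat A B D₁ D₂ C₁ E row j) := by
  eta_reduce
  ext u
  obtain ⟨u₁, u, rfl⟩ := exists_sum_elim_eq u
  obtain ⟨u₂, u, rfl⟩ := exists_sum_elim_eq u
  obtain ⟨u₃, u₄, rfl⟩ := exists_sum_elim_eq u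
  rw [mem_dualCode_span_range_iff, Gmat_mulVec, mem_span_range_iff_exists_vecMul]
  simp only [← Sum.elim_zero_zero, Sum.elim_eq_iff]
  constructor
  · rintro ⟨h₁, h₂, h₃⟩
    refine ⟨Sum.elim u₄ (Sum.elim (u₃ + E.map eR *ᵥ u₄) (u₂ + C₁.map eR *ᵥ u₄)), ?_⟩
    simp only [vecMul_Hmat, Sum.elim_eq_iff]
    refine ⟨?_, ?_, ?_, trivial⟩
    · have hA := congrArg (A.map eR *ᵥ ·) h₂
      have hB := congrArg (B.map eR *ᵥ ·) h₃
      simp only [mulVec_add, mulVec_smul, mulVec_zero] at hA hB ⊢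
      linear_combination (norm := match_scalars <;> decide) h₁ + hA + hB
    · linear_combination (norm := match_scalars <;> decide) h₂
    · linear_combination (norm := match_scalars <;> decide) h₃
  · rintro ⟨x, hx⟩
    obtain ⟨x₁, x, rfl⟩ := exists_sum_elim_eq x
    obtain ⟨x₂, x₃, rfl⟩ := exists_sum_elim_eq x
    simp only [vecMul_Hmat, Sum.elim_eq_iff] at hx
    obtain ⟨rfl, rfl, rfl, rfl⟩ := hx
    refine ⟨?_, ?_, ?_⟩ <;> simp only [mulVec_add, mulVec_smul, smul_add] <;>
      match_scalars <;> decide
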